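/- For every connected graph G = (V, E) and every node r ∈ V, there exists a BFS spanning tree T of G rooted at r that is a 2-height respecting tree, i.e., for any two nodes u, u' at the same level with h₂(u) = h₂(u') = h₂(parent(u)) = h₂(parent(u')), there is no node v adjacent in G to both u and u' with level(v) = level(u) − 1. -/

import Mathlib

/-!
Build the tree from the deepest level up. The 2-heights of the nodes at level `ℓ` only depend on
the parents of deeper nodes, so they are already fixed when level `ℓ` is treated. Call two nodes of
level `ℓ` conflicting if they have the same 2-height and a common neighbour at level `ℓ - 1`, and
take a maximal matching of the conflicts. Hanging both ends of each matched pair on a common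
neighbour gives that neighbour two children of maximal 2-height, so its 2-height exceeds theirs.
By maximality every conflicting pair contains a matched node, and re-hanging level `ℓ` changes no
2-height at the deeper levels already treated.
-/

structure RadioTree (V : Type) [Fintype V] [DecidableEq V] where
  root : V
  parent : V → V
  lvl : V → ℕ
  lvl_root : lvl root = 0
  lvl_parent : ∀ v, v ≠ root → lvl v = lvl (parent v) + 1

namespace RadioTree

variable {V : Type} [Fintype V] [DecidableEq V]

/-- The children of `v`: the non-root nodes whose parent is `v`. -/
def children (T : RadioTree V) (v : V) : Finset V :=
  Finset.univ.filter fun u => u ≠ T.root ∧ T.parent u = v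

def IsLeaf (T : RadioTree V) (v : V) : Prop := T.children v = ∅

/-- `h2` is the 2-height function of the rooted tree `T`:
`h2 v = 0` for leaves; otherwise, with `m` the maximum 2-height among the
children of `v`, `h2 v = m` if exactly one child attains `m`, and
`h2 v = m + 1` if at least two children attain `m`. -/
def IsH2 (T : RadioTree V) (h2 : V → ℕ) : Prop :=
  ∀ v,
    (T.children v = ∅ → h2 v = 0) ∧
    (T.children v ≠ ∅ →
      (((T.children v).filter fun u => h2 u = (T.children v).sup h2).card = 1 →
        h2 v = (T.children v).sup h2) ∧
      (2 ≤ ((T.children v).filter fun u => h2 u = (T.children v).sup h2).card →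
        h2 v = (T.children v).sup h2 + 1))

/-- `u` lies in the subtree rooted at `v`. -/
def InSubtree (T : RadioTree V) (v u : V) : Prop :=
  ∃ k, T.parent^[k] u = v ∧ T.lvl u = T.lvl v + k

end RadioTree

open Finset

section h2Combine

variable {α : Type*} [DecidableEq α]

def h2Combine (C : Finset α) (f : α → ℕ) : ℕ :=
  if C = ∅ then 0 else if #{u ∈ C | f u = C.sup f} = 1 then C.sup f else C.sup f + 1

lemma h2Combine_congr {C : Finset α} {f g : α → ℕ} (h : ∀ u ∈ C, f u = g u) :
    h2Combine C f = h2Combine C g := by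
  have hsup : C.sup f = C.sup g := sup_congr rfl h
  have hfilter : {u ∈ C | f u = C.sup f} = {u ∈ C | g u = C.sup g} :=
    filter_congr fun u hu => by rw [h u hu, hsup]
  rw [h2Combine, h2Combine, hfilter, hsup]

lemma lt_h2Combine {C : Finset α} {f : α → ℕ} {u w : α} (hu : u ∈ C) (hw : w ∈ C) (huw : u ≠ w)
    (h : f u = f w) : f u < h2Combine C f := by
  have hle : f u ≤ C.sup f := le_sup hu
  rw [h2Combine, if_neg (ne_empty_of_mem hu)]
  rcases hle.lt_or_eq with hlt | heq
  · split_ifs <;> omega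
  · have htwo : 1 < #{x ∈ C | f x = C.sup f} :=
      one_lt_card.mpr ⟨u, mem_filter.mpr ⟨hu, heq⟩, w, mem_filter.mpr ⟨hw, h ▸ heq⟩, huw⟩
    rw [if_neg htwo.ne']
    omega

end h2Combine

lemma SimpleGraph.exists_isMatching_forall_adj_mem_verts {V : Type*} [Finite V]
    (G : SimpleGraph V) :
    ∃ M : G.Subgraph, M.IsMatching ∧ ∀ ⦃u v⦄, G.Adj u v → u ∈ M.verts ∨ v ∈ M.verts := by
  obtain ⟨M, -, hmax⟩ :=
    Finite.exists_le_maximal (p := Subgraph.IsMatching) (a := (⊥ : G.Subgraph)) fun _ h => h.elim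
  refine ⟨M, hmax.prop, fun u v huv => ?_⟩
  by_contra! hout
  have hdisj : Disjoint M.support (G.subgraphOfAdj huv).support := by
    rw [hmax.prop.support_eq_verts, SimpleGraph.support_subgraphOfAdj]
    rw [Set.disjoint_left]
    rintro a ha (rfl | rfl)
    exacts [hout.1 ha, hout.2 ha]
  have hle := hmax.2 (hmax.prop.sup (Subgraph.IsMatching.subgraphOfAdj huv) hdisj) le_sup_left
  exact hout.1 (Subgraph.verts_mono (le_sup_right.trans hle) (by simp))

lemma SimpleGraph.Connected.exists_adj_dist_add_one_eq {V : Type*} {G : SimpleGraph V}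
    (hconn : G.Connected) {r v : V} (hv : v ≠ r) :
    ∃ w, G.Adj w v ∧ G.dist r w + 1 = G.dist r v := by
  obtain ⟨p, hp⟩ := hconn.exists_walk_length_eq_dist v r
  cases p with
  | nil => exact absurd rfl hv
  | cons hadj q =>
    refine ⟨_, hadj.symm, ?_⟩
    have hq : G.dist r _ ≤ q.length := G.dist_comm ▸ SimpleGraph.dist_le q
    have := hadj.symm.diff_dist_adj (u := r)
    rw [SimpleGraph.Walk.length_cons, G.dist_comm] at hp
    omega

namespace RadioTree

variable {V : Type} [Fintype V] [DecidableEq V]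

section

variable (T : RadioTree V)

lemma mem_children {u v : V} : u ∈ T.children v ↔ u ≠ T.root ∧ T.parent u = v := by
  simp [children]

lemma lvl_of_mem_children {u v : V} (h : u ∈ T.children v) : T.lvl u = T.lvl v + 1 := by
  obtain ⟨hu, rfl⟩ := T.mem_children.mp h
  exact T.lvl_parent u hu

lemma ne_root_of_lvl_ne_zero {v : V} (h : T.lvl v ≠ 0) : v ≠ T.root :=
  fun e => h (e ▸ T.lvl_root)

lemma wellFounded_children : WellFounded fun u v => u ∈ T.children v :=
  Subrelation.wf (fun {u v} h => by
      have := T.lvl_of_mem_children h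
      have : T.lvl u ≤ univ.sup T.lvl := le_sup (mem_univ u)
      show univ.sup T.lvl - T.lvl u < univ.sup T.lvl - T.lvl v
      omega)
    (measure fun v => univ.sup T.lvl - T.lvl v).wf

noncomputable def height2 : V → ℕ :=
  T.wellFounded_children.fix fun v ih =>
    h2Combine (T.children v) fun u => if h : u ∈ T.children v then ih u h else 0

lemma height2_eq (v : V) : T.height2 v = h2Combine (T.children v) T.height2 := by
  rw [height2, WellFounded.fix_eq]
  exact h2Combine_congr fun u hu => dif_pos hu

lemma IsH2.eq_h2Combine {h2 : V → ℕ} (h : T.IsH2 h2) (v : V) :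
    h2 v = h2Combine (T.children v) h2 := by
  obtain ⟨hleaf, hnode⟩ := h v
  rw [h2Combine]
  split_ifs with hC hone
  · exact hleaf hC
  · exact (hnode hC).1 hone
  · obtain ⟨u, hu, hsup⟩ := exists_mem_eq_sup _ (nonempty_iff_ne_empty.mpr hC) h2
    have : 0 < #{x ∈ T.children v | h2 x = (T.children v).sup h2} :=
      card_pos.mpr ⟨u, mem_filter.mpr ⟨hu, hsup.symm⟩⟩
    exact (hnode hC).2 (by omega)

lemma IsH2.eq_height2 {h2 : V → ℕ} (h : T.IsH2 h2) : h2 = T.height2 := by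
  funext v
  induction v using T.wellFounded_children.induction with
  | _ v ih => rw [h.eq_h2Combine, height2_eq]; exact h2Combine_congr ih

lemma height2_lt_of_siblings {u w q : V} (hu : u ∈ T.children q) (hw : w ∈ T.children q)
    (huw : u ≠ w) (h : T.height2 u = T.height2 w) : T.height2 u < T.height2 q :=
  T.height2_eq q ▸ lt_h2Combine hu hw huw h

end

lemma children_eq_of_parent_eq {T T' : RadioTree V} {ℓ : ℕ} (hroot : T.root = T'.root)
    (hlvl : T.lvl = T'.lvl) (hpar : ∀ v, ℓ < T.lvl v → T.parent v = T'.parent v) {v : V}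
    (hv : ℓ ≤ T.lvl v) : T.children v = T'.children v := by
  ext u
  rw [mem_children, mem_children, ← hroot]
  refine and_congr_right fun hu => ?_
  have hdeep : T.parent u = v ∨ T'.parent u = v → ℓ < T.lvl u := by
    rintro (rfl | rfl)
    · have := T.lvl_parent u hu
      omega
    · have := T'.lvl_parent u (hroot ▸ hu)
      rw [← hlvl] at this
      omega
  constructor
  · intro h
    rwa [← hpar u (hdeep (.inl h))]
  · intro h
    rwa [hpar u (hdeep (.inr h))]

lemma height2_eq_of_parent_eq {T T' : RadioTree V} {ℓ : ℕ} (hroot : T.root = T'.root)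
    (hlvl : T.lvl = T'.lvl) (hpar : ∀ v, ℓ < T.lvl v → T.parent v = T'.parent v) :
    ∀ v, ℓ ≤ T.lvl v → T.height2 v = T'.height2 v := by
  intro v
  induction v using T.wellFounded_children.induction with
  | _ v ih =>
    intro hv
    rw [height2_eq, height2_eq, ← children_eq_of_parent_eq hroot hlvl hpar hv]
    exact h2Combine_congr fun u hu => ih u hu (by have := T.lvl_of_mem_children hu; omega)

variable (G : SimpleGraph V)

def EdgesIn (T : RadioTree V) : Prop := ∀ v, v ≠ T.root → G.Adj (T.parent v) v

def conflictGraph (T : RadioTree V) (ℓ : ℕ) : SimpleGraph V where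
  Adj u u' := u ≠ u' ∧ T.lvl u = ℓ ∧ T.lvl u' = ℓ ∧ T.height2 u = T.height2 u' ∧
    ∃ v, G.Adj v u ∧ G.Adj v u' ∧ T.lvl v + 1 = ℓ
  symm := ⟨fun _ _ ⟨hne, hu, hu', hh, v, hvu, hvu', hv⟩ =>
    ⟨hne.symm, hu', hu, hh.symm, v, hvu', hvu, hv⟩⟩
  loopless := ⟨fun _ h => h.1 rfl⟩

/-- The non-collision property (★) at level `ℓ`. -/
def IsRespectingAt (T : RadioTree V) (ℓ : ℕ) : Prop :=
  ∀ ⦃u u'⦄, (T.conflictGraph G ℓ).Adj u u' →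
    T.height2 u ≠ T.height2 (T.parent u) ∨ T.height2 u' ≠ T.height2 (T.parent u')

lemma IsRespectingAt.of_parent_eq {T T' : RadioTree V} {m ℓ : ℕ} (hroot : T'.root = T.root)
    (hlvl : T'.lvl = T.lvl) (hpar : ∀ v, m < T'.lvl v → T'.parent v = T.parent v) (hmℓ : m < ℓ)
    (h : T.IsRespectingAt G ℓ) : T'.IsRespectingAt G ℓ := by
  have hheight := height2_eq_of_parent_eq hroot hlvl hpar
  have hlevel : ∀ u, T'.lvl u = ℓ → T'.height2 u = T.height2 u ∧
      T'.height2 (T'.parent u) = T.height2 (T.parent u) := by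
    intro u hu
    have := T'.lvl_parent u (T'.ne_root_of_lvl_ne_zero (by omega))
    rw [← hpar u (by omega)]
    exact ⟨hheight u (by omega), hheight _ (by omega)⟩
  rintro u u' ⟨hne, hu, hu', hh, v, hvu, hvu', hv⟩
  obtain ⟨hhu, hpu⟩ := hlevel u hu
  obtain ⟨hhu', hpu'⟩ := hlevel u' hu'
  rw [hhu, hhu'] at hh
  rw [hhu, hpu, hhu', hpu']
  rw [hlvl] at hu hu' hv
  exact h ⟨hne, hu, hu', hh, v, hvu, hvu', hv⟩

lemma exists_parent_eq_of_isMatching {T : RadioTree V} (hT : T.EdgesIn G) {H : SimpleGraph V}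
    {M : H.Subgraph} (hM : M.IsMatching)
    (hlow : ∀ ⦃u w⦄, M.Adj u w →
      ∃ x, G.Adj x u ∧ G.Adj x w ∧ T.lvl x + 1 = T.lvl u ∧ T.lvl x + 1 = T.lvl w) :
    ∃ T' : RadioTree V, T'.root = T.root ∧ T'.lvl = T.lvl ∧ T'.EdgesIn G ∧
      (∀ v ∉ M.verts, T'.parent v = T.parent v) ∧
      ∀ ⦃u w⦄, M.Adj u w → T'.parent u = T'.parent w := by
  classical
  have : Nonempty V := ⟨T.root⟩
  let IsLowerNbr (x : V) (e : Sym2 V) : Prop := ∀ y ∈ e, G.Adj x y ∧ T.lvl x + 1 = T.lvl y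
  have hlow' : ∀ e ∈ M.edgeSet, ∃ x, IsLowerNbr x e := by
    rintro ⟨u, w⟩ huw
    obtain ⟨x, hxu, hxw, hu, hw⟩ := hlow huw
    refine ⟨x, fun y hy => ?_⟩
    rcases Sym2.mem_iff.mp hy with rfl | rfl
    exacts [⟨hxu, hu⟩, ⟨hxw, hw⟩]
  let parent' (v : V) : V :=
    if h : v ∈ M.verts then Classical.epsilon (IsLowerNbr · (hM.toEdge ⟨v, h⟩)) else T.parent v
  have hparent' : ∀ v ∈ M.verts, G.Adj (parent' v) v ∧ T.lvl (parent' v) + 1 = T.lvl v := by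
    intro v hv
    simp only [parent', dif_pos hv]
    exact Classical.epsilon_spec (hlow' _ (hM.toEdge ⟨v, hv⟩).2) v (hM.mem_coe_toEdge hv)
  refine ⟨⟨T.root, parent', T.lvl, T.lvl_root, fun v hv => ?_⟩, rfl, rfl, fun v hv => ?_,
    fun v hv => by simp [parent', hv], fun u w huw => ?_⟩
  · by_cases hvM : v ∈ M.verts
    · exact (hparent' v hvM).2.symm
    · simpa [parent', hvM] using T.lvl_parent v hv
  · by_cases hvM : v ∈ M.verts
    · exact (hparent' v hvM).1
    · simpa [parent', hvM] using hT v hv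
  · simp only [parent', dif_pos huw.fst_mem, dif_pos huw.snd_mem, hM.toEdge_eq_toEdge_of_adj huw]

lemma exists_isRespectingAt {T : RadioTree V} (hT : T.EdgesIn G) (ℓ : ℕ) :
    ∃ T' : RadioTree V, T'.root = T.root ∧ T'.lvl = T.lvl ∧ T'.EdgesIn G ∧
      (∀ v, ℓ < T'.lvl v → T'.parent v = T.parent v) ∧ T'.IsRespectingAt G ℓ := by
  obtain ⟨M, hM, hcover⟩ := (T.conflictGraph G ℓ).exists_isMatching_forall_adj_mem_verts
  obtain ⟨T', hroot, hlvl, hT', hfix, hsib⟩ := exists_parent_eq_of_isMatching G hT hM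
    fun u w huw =>
      have ⟨_, hu, hw, _, x, hxu, hxw, hx⟩ := M.adj_sub huw
      ⟨x, hxu, hxw, hx.trans hu.symm, hx.trans hw.symm⟩
  have hMlvl : ∀ v ∈ M.verts, T.lvl v = ℓ := fun v hv =>
    let ⟨_, hvw, _⟩ := hM hv
    (M.adj_sub hvw).2.1
  have hpar : ∀ v, ℓ < T'.lvl v → T'.parent v = T.parent v := fun v hv =>
    hfix v fun hvM => by have := hMlvl v hvM; rw [hlvl] at hv; omega
  have hheight := height2_eq_of_parent_eq hroot hlvl hpar
  have hmatched : ∀ u ∈ M.verts, T'.height2 u ≠ T'.height2 (T'.parent u) := by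
    intro u hu
    obtain ⟨w, huw, -⟩ := hM hu
    obtain ⟨hne, hul, hwl, hh, x, -, -, hx⟩ := M.adj_sub huw
    have hchild : ∀ y, T.lvl y = ℓ → T'.parent y = T'.parent u → y ∈ T'.children (T'.parent u) :=
      fun y hy hpy => T'.mem_children.mpr ⟨T'.ne_root_of_lvl_ne_zero (by rw [hlvl]; omega), hpy⟩
    refine (T'.height2_lt_of_siblings (hchild u hul rfl) (hchild w hwl (hsib huw).symm) hne ?_).ne
    rw [hheight u (by rw [hlvl]; omega), hheight w (by rw [hlvl]; omega), hh]
  refine ⟨T', hroot, hlvl, hT', hpar, ?_⟩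
  rintro u u' ⟨hne, hu, hu', hh, v, hvu, hvu', hv⟩
  rw [hheight u hu.ge, hheight u' hu'.ge] at hh
  rw [hlvl] at hu hu' hv
  rcases hcover ⟨hne, hu, hu', hh, v, hvu, hvu', hv⟩ with h | h
  exacts [.inl (hmatched u h), .inr (hmatched u' h)]

lemma exists_forall_isRespectingAt {T : RadioTree V} (hT : T.EdgesIn G) :
    ∃ T' : RadioTree V, T'.root = T.root ∧ T'.lvl = T.lvl ∧ T'.EdgesIn G ∧
      ∀ ℓ, T'.IsRespectingAt G ℓ := by
  suffices h : ∀ m ≤ univ.sup T.lvl + 1, ∃ T' : RadioTree V, T'.root = T.root ∧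
      T'.lvl = T.lvl ∧ T'.EdgesIn G ∧ ∀ ℓ, m ≤ ℓ → T'.IsRespectingAt G ℓ by
    obtain ⟨T', hroot, hlvl, hT', hresp⟩ := h 0 (Nat.zero_le _)
    exact ⟨T', hroot, hlvl, hT', fun ℓ => hresp ℓ ℓ.zero_le⟩
  intro m hm
  induction hm using Nat.decreasingInduction with
  | self =>
    refine ⟨T, rfl, rfl, hT, fun ℓ hℓ u u' ⟨_, hu, _⟩ => ?_⟩
    have : T.lvl u ≤ univ.sup T.lvl := le_sup (mem_univ u)
    omega
  | of_succ m _ ih =>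
    obtain ⟨T₁, hroot₁, hlvl₁, hT₁, hresp₁⟩ := ih
    obtain ⟨T₂, hroot₂, hlvl₂, hT₂, hpar₂, hresp₂⟩ := exists_isRespectingAt G hT₁ m
    refine ⟨T₂, hroot₂.trans hroot₁, hlvl₂.trans hlvl₁, hT₂, fun ℓ hℓ => ?_⟩
    rcases hℓ.eq_or_lt with rfl | hlt
    · exact hresp₂
    · exact (hresp₁ ℓ hlt).of_parent_eq G hroot₂ hlvl₂ hpar₂ hlt

lemma exists_edgesIn_lvl_eq_dist {G : SimpleGraph V} (hconn : G.Connected) (r : V) :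
    ∃ T : RadioTree V, T.root = r ∧ T.EdgesIn G ∧ ∀ v, T.lvl v = G.dist r v := by
  choose! p hp using fun v (hv : v ≠ r) => hconn.exists_adj_dist_add_one_eq hv
  exact ⟨⟨r, p, G.dist r, SimpleGraph.dist_self, fun v hv => (hp v hv).2.symm⟩, rfl,
    fun v hv => (hp v hv).1, fun _ => rfl⟩

end RadioTree

/-- every connected graph `G` with a distinguished node `r` has a
BFS spanning tree rooted at `r` which is a 2-height respecting tree: for any
two distinct nodes `u ≠ u'` at the same level with
`h₂ u = h₂ u' = h₂ (parent u) = h₂ (parent u')`, there is no node `v` adjacent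
in `G` to both `u` and `u'` with `level v = level u - 1`. -/
theorem stmt8 {V : Type} [Fintype V] [DecidableEq V] (G : SimpleGraph V)
    (hconn : G.Connected) (r : V) :
    ∃ T : RadioTree V, T.root = r ∧
      (∀ v, v ≠ r → G.Adj (T.parent v) v) ∧
      (∀ v, T.lvl v = G.dist r v) ∧
      (∀ h2 : V → ℕ, T.IsH2 h2 →
        ∀ u u' : V, u ≠ u' → u ≠ r → u' ≠ r →
          T.lvl u = T.lvl u' →
          h2 u = h2 u' → h2 u = h2 (T.parent u) → h2 u' = h2 (T.parent u') →
          ¬ ∃ v : V, G.Adj v u ∧ G.Adj v u' ∧ T.lvl v + 1 = T.lvl u) := by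
  obtain ⟨T₀, rfl, hT₀, hlvl₀⟩ := RadioTree.exists_edgesIn_lvl_eq_dist hconn r
  obtain ⟨T, hroot, hlvl, hT, hresp⟩ := RadioTree.exists_forall_isRespectingAt G hT₀
  refine ⟨T, hroot, hroot ▸ hT, fun v => hlvl ▸ hlvl₀ v, ?_⟩
  rintro h2 hh2 u u' hne - - hlvl_eq hh hpu hpu' ⟨v, hvu, hvu', hv⟩
  obtain rfl := hh2.eq_height2
  rcases hresp (T.lvl u) ⟨hne, rfl, hlvl_eq.symm, hh, v, hvu, hvu', hv⟩ with h | h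
  exacts [h hpu, h hpu']
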